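/- arXiv:2306.05225 — 2 statements merged into one kernel-verified Lean document; each statement's English description precedes it below -/
import Mathlib

section
/- Let E be a real Hilbert space, J : E → ℝ, λ ∈ ℝ, and x ∈ E with ∇J(x) ≠ 0. Suppose the gradient map ∇J : E → E is Fréchet differentiable at x with derivative H : E →L[ℝ] E. Set v = −∇J(x)/‖∇J(x)‖ (the normalized negative gradient direction). Then, as the step size α tends to 0 from the right (with the balanced coefficient δ = λ/α), the interpolated gradient (1 − λ/α) · ∇J(x) + (λ/α) · ∇J(x + α·v) converges to ∇J(x) − (λ/‖∇J(x)‖) · H(∇J(x)). -/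
open Filter Topology

/-- **Corollary 1 of the paper (limit form).** Let `J : E → ℝ` on a real Hilbert space have
gradient map Fréchet differentiable at `x` with derivative (Hessian) `H`, with
`∇J(x) ≠ 0`, and set `v = −∇J(x)/‖∇J(x)‖`. Then, as the step size `α → 0⁺` (with the
balanced coefficient `δ = λ/α`), the interpolated gradient
`(1 − λ/α) • ∇J(x) + (λ/α) • ∇J(x + α•v)` converges to
`∇J(x) − (λ/‖∇J(x)‖) • H(∇J(x))`. -/
theorem interpolated_gradient_tendsto_penalized_gradient
    {E : Type*} [NormedAddCommGroup E] [InnerProductSpace ℝ E] [CompleteSpace E]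
    (J : E → ℝ) (lam : ℝ) (x : E) (H : E →L[ℝ] E)
    (hH : HasFDerivAt (fun y => gradient J y) H x)
    (hne : gradient J x ≠ 0)
    (v : E) (hv : v = -((‖gradient J x‖)⁻¹ • gradient J x)) :
    Tendsto
      (fun α : ℝ => (1 - lam / α) • gradient J x + (lam / α) • gradient J (x + α • v))
      (𝓝[>] (0 : ℝ))
      (𝓝 (gradient J x - (lam / ‖gradient J x‖) • H (gradient J x))) := by
  set g := fun y => gradient J y with hg
  -- curve derivative
  have hcurve : HasDerivAt (fun α : ℝ => g (x + α • v)) (H v) 0 := by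
    have hline : HasDerivAt (fun α : ℝ => x + α • v) v 0 := by
      simpa using ((hasDerivAt_id (0:ℝ)).smul_const v).const_add x
    have hH2 : HasFDerivAt g H (x + (0:ℝ) • v) := by simpa using hH
    have := hH2.comp_hasDerivAt 0 hline
    exact this
  have hslope : Tendsto (fun α : ℝ => α⁻¹ • (g (x + α • v) - g (x + (0:ℝ) • v)))
      (𝓝[>] (0:ℝ)) (𝓝 (H v)) := by
    have := hasDerivAt_iff_tendsto_slope.mp hcurve
    have h2 : Tendsto (slope (fun α : ℝ => g (x + α • v)) 0) (𝓝[>] (0:ℝ)) (𝓝 (H v)) :=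
      this.mono_left (nhdsWithin_mono _ (fun a ha => ne_of_gt ha))
    refine h2.congr (fun a => ?_)
    simp [slope_def_field, slope, vsub_eq_sub]
  have hmain : Tendsto
      (fun α : ℝ => g x + lam • (α⁻¹ • (g (x + α • v) - g (x + (0:ℝ) • v))))
      (𝓝[>] (0:ℝ)) (𝓝 (g x + lam • H v)) :=
    tendsto_const_nhds.add (hslope.const_smul lam)
  have heq : (fun α : ℝ => (1 - lam / α) • g x + (lam / α) • g (x + α • v))
      =ᶠ[𝓝[>] (0:ℝ)]
      (fun α : ℝ => g x + lam • (α⁻¹ • (g (x + α • v) - g (x + (0:ℝ) • v)))) := by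
    filter_upwards [self_mem_nhdsWithin] with a (ha : 0 < a)
    have hane : a ≠ 0 := ne_of_gt ha
    simp only [zero_smul, add_zero, smul_smul, smul_sub, sub_smul, one_smul, div_eq_mul_inv]
    module
  have hval : g x + lam • H v = g x - (lam / ‖g x‖) • H (g x) := by
    rw [hv]
    simp [smul_smul, div_eq_mul_inv, sub_eq_add_neg]
    rfl
  rw [← hval]
  exact hmain.congr' heq.symm
end

section
/- Let E be a real Hilbert space, J : E → ℝ, λ ∈ ℝ, x ∈ E with ∇J(x) ≠ 0, and set v = −∇J(x)/‖∇J(x)‖, so ‖v‖ = 1. Let α > 0 and suppose the gradient map ∇J is Fréchet differentiable at every point of the segment [x, x + α·v] with derivative H(y) at y, and that y ↦ H(y) is Lipschitz with constant M ≥ 0 in operator norm on this segment. Then the interpolated-gradient approximation of Corollary 1 satisfies the explicit error bound ‖(1 − λ/α)·∇J(x) + (λ/α)·∇J(x + α·v) − (∇J(x) + λ·H(x) v)‖ ≤ |λ| · M · α / 2. -/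
/-- **Corollary 1 of the paper (quantitative error bound).** Let `J : E → ℝ` on a real
Hilbert space, `∇J(x) ≠ 0`, `v = −∇J(x)/‖∇J(x)‖` (so `‖v‖ = 1`), and `α > 0`. Suppose the
gradient map of `J` is Fréchet differentiable at every point of the segment `[x, x + α•v]`
with derivative (Hessian) `H y` at `y`, and `y ↦ H y` is Lipschitz with constant `M ≥ 0` in
operator norm on this segment. Then the interpolated-gradient approximation satisfies
`‖(1 − λ/α)•∇J(x) + (λ/α)•∇J(x + α•v) − (∇J(x) + λ•H(x)v)‖ ≤ |λ| · M · α / 2`. -/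
theorem interpolated_gradient_error_bound
    {E : Type*} [NormedAddCommGroup E] [InnerProductSpace ℝ E] [CompleteSpace E]
    (J : E → ℝ) (lam : ℝ) (x : E)
    (hne : gradient J x ≠ 0)
    (v : E) (hv : v = -((‖gradient J x‖)⁻¹ • gradient J x))
    (α : ℝ) (hα : 0 < α) (H : E → E →L[ℝ] E) (M : ℝ) (hM : 0 ≤ M)
    (hdiff : ∀ y ∈ (fun t : ℝ => x + t • v) '' Set.Icc 0 α,
      HasFDerivAt (fun z => gradient J z) (H y) y)
    (hLip : ∀ y₁ ∈ (fun t : ℝ => x + t • v) '' Set.Icc 0 α,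
      ∀ y₂ ∈ (fun t : ℝ => x + t • v) '' Set.Icc 0 α,
        ‖H y₁ - H y₂‖ ≤ M * ‖y₁ - y₂‖) :
    ‖(1 - lam / α) • gradient J x + (lam / α) • gradient J (x + α • v) -
        (gradient J x + lam • H x v)‖ ≤ |lam| * M * α / 2 := by
  have hvnorm : ‖v‖ = 1 := by
    rw [hv, norm_neg, norm_smul, norm_inv, norm_norm]
    field_simp [norm_ne_zero_iff.mpr hne]
  have hmem : ∀ t ∈ Set.Icc (0:ℝ) α,
      x + t • v ∈ (fun t : ℝ => x + t • v) '' Set.Icc 0 α :=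
    fun t ht => ⟨t, ht, rfl⟩
  -- φ(t) = ∇J(x+tv) - ∇J(x) - t • H x v
  set g : E → E := fun z => gradient J z with hg
  set φ : ℝ → E := fun t => g (x + t • v) - g x - t • H x v with hφ
  have hφderiv : ∀ t ∈ Set.Icc (0:ℝ) α,
      HasDerivAt φ (H (x + t • v) v - H x v) t := by
    intro t ht
    have h1 : HasDerivAt (fun s : ℝ => x + s • v) v t := by
      simpa using ((hasDerivAt_id t).smul_const v).const_add x
    have h2 : HasDerivAt (fun s : ℝ => g (x + s • v)) (H (x + t • v) v) t := by
      have := (hdiff _ (hmem t ht)).comp_hasDerivAt t h1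
      exact this
    have h3 : HasDerivAt (fun s : ℝ => g (x + s • v) - g x) (H (x + t • v) v) t :=
      h2.sub_const _
    have := h3.sub ((hasDerivAt_id t).smul_const (H x v))
    simp only [one_smul] at this
    exact this
  have hbound : ∀ t ∈ Set.Ico (0:ℝ) α, ‖H (x + t • v) v - H x v‖ ≤ M * t := by
    intro t ht
    have h0 : x + (0:ℝ) • v ∈ (fun t : ℝ => x + t • v) '' Set.Icc 0 α :=
      hmem 0 ⟨le_refl 0, hα.le⟩
    have hlip := hLip _ (hmem t ⟨ht.1, ht.2.le⟩) _ h0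
    calc ‖H (x + t • v) v - H x v‖
        = ‖(H (x + t • v) - H (x + (0:ℝ) • v)) v‖ := by simp
      _ ≤ ‖H (x + t • v) - H (x + (0:ℝ) • v)‖ * ‖v‖ :=
          (H (x + t • v) - H (x + (0:ℝ) • v)).le_opNorm v
      _ ≤ M * ‖(x + t • v) - (x + (0:ℝ) • v)‖ * 1 := by
          rw [hvnorm]
          gcongr ?_ * _
      _ = M * t := by
          rw [mul_one]
          congr 1
          have : (x + t • v) - (x + (0:ℝ) • v) = t • v := by
            simp
          rw [this, norm_smul, hvnorm, mul_one, Real.norm_eq_abs, abs_of_nonneg ht.1]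
  -- fencing with B(t) = M t² / 2
  have key : ‖φ α‖ ≤ M * α ^ 2 / 2 := by
    have hB : ∀ t : ℝ, HasDerivAt (fun s => M * s ^ 2 / 2) (M * t) t := by
      intro t
      have : HasDerivAt (fun s : ℝ => M * s ^ 2 / 2) (M * (2 * t) / 2) t := by
        exact (((hasDerivAt_pow 2 t).const_mul M).div_const 2).congr_deriv (by ring_nf)
      simpa using this.congr_deriv (by ring)
    have hcont : ContinuousOn φ (Set.Icc 0 α) :=
      fun t ht => (hφderiv t ht).continuousAt.continuousWithinAt
    have := image_norm_le_of_norm_deriv_right_le_deriv_boundary hcont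
      (fun t ht => (hφderiv t (Set.Ico_subset_Icc_self ht)).hasDerivWithinAt)
      (by simp [hφ]) hB
      (fun t ht => hbound t ht)
      (Set.right_mem_Icc.mpr hα.le)
    simpa using this
  -- rewrite LHS
  have hLHS : (1 - lam / α) • g x + (lam / α) • g (x + α • v) -
      (g x + lam • H x v) = (lam / α) • φ α := by
    have hα0 : α ≠ 0 := hα.ne'
    rw [hφ]
    simp only [smul_sub, smul_smul]
    rw [div_mul_cancel₀ _ hα0]
    module
  rw [hLHS, norm_smul, Real.norm_eq_abs, abs_div, abs_of_pos hα]
  calc |lam| / α * ‖φ α‖ ≤ |lam| / α * (M * α ^ 2 / 2) := by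
        gcongr
    _ = |lam| * M * α / 2 := by field_simp
end
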